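/- Let S be a type, A a nonempty finite type, and T : S → A → S a deterministic transition function. For a policy π : S → A and state s define the trajectory traj π s : ℕ → S by traj π s 0 = s and traj π s (t+1) = T (traj π s t) (π (traj π s t)). Let γ ∈ [0,1), let k, m be positive natural numbers, bins b_j = [j/m, (j+1)/m) ⊆ ℝ for j ∈ Fin m, and f : Fin k → S → ℝ with f i s ∈ [0,1) for all i, s. Define cumulants φ (i,j) s = (if f i s ∈ b_j then 1 else 0) and, for a policy π, successor features ψ^π (l,h) (s,a) = φ (l,h) s + ∑'_{t : ℕ} γ^{t+1} · φ (l,h) (traj π (T s a) t). Suppose Π* : Fin k × Fin m → (S → A) is a family of policies satisfying: (optimality) for every policy π, every (i,j), s and a, ψ^π (i,j) (s,a) ≤ ψ^{Π*(i,j)} (i,j) (s,a); (optimal independent controllability) for every (i,j), every l ≠ i, every s and t, f l (traj (Π*(i,j)) s t) = f l s; and (achievability) ψ^{Π*(i,j)} (i,j) (s,a) > 0 for every (i,j), s, a. Let b : Fin k → Fin m specify a goal, set w (l,h) = 1 if h = b l and 0 otherwise, and let π_GPI : S → A be any policy such that for all s and a, max over (i,j) of ∑_{(l,h)} w (l,h)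 · ψ^{Π*(i,j)} (l,h) (s, π_GPI s) ≥ max over (i,j) of ∑_{(l,h)} w (l,h) · ψ^{Π*(i,j)} (l,h) (s, a). Then for every initial state s there exists t ∈ ℕ such that f i (traj π_GPI s t) ∈ b_{b i} for every i ∈ Fin k. -/
import Mathlib


open scoped Classical

/-- The trajectory generated from state `s` by following policy `π` in the
deterministic dynamics `T`. -/
def traj {S A : Type*} (T : S → A → S) (π : S → A) (s : S) : ℕ → S
  | 0 => s
  | t + 1 => T (traj T π s t) (π (traj T π s t))

/-- Theorem 1 (deterministic-dynamics setting): if the features `f 1, …, f k` are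
optimally independently controllable, then for any goal cell of the induced partition
— a bin `b i` for each feature `i`, with one-hot weight vector `w` — the Generalized
Policy Improvement policy `πGPI` over the optimal feature-control policies `Pstar`
achieves the goal: its trajectory from any start state reaches a state where every
feature lies in its goal bin. -/
theorem stmt9 {S A : Type*} [Fintype A] [Nonempty A] (T : S → A → S)
    (γ : ℝ) (hγ0 : 0 ≤ γ) (hγ1 : γ < 1)
    (k m : ℕ) (hk : 0 < k) (hm : 0 < m)
    (f : Fin k → S → ℝ) (hf : ∀ (i : Fin k) (s : S), f i s ∈ Set.Ico (0 : ℝ) 1)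
    (φ : Fin k × Fin m → S → ℝ)
    (hφ : ∀ (i : Fin k) (j : Fin m) (s : S),
      φ (i, j) s = if f i s ∈ Set.Ico ((j : ℝ) / m) (((j : ℝ) + 1) / m) then 1 else 0)
    (ψ : (S → A) → Fin k × Fin m → S → A → ℝ)
    (hψ : ∀ (π : S → A) (p : Fin k × Fin m) (s : S) (a : A),
      ψ π p s a = φ p s + ∑' t : ℕ, γ ^ (t + 1) * φ p (traj T π (T s a) t))
    (Pstar : Fin k × Fin m → S → A)
    (hopt : ∀ (π : S → A) (p : Fin k × Fin m) (s : S) (a : A),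
      ψ π p s a ≤ ψ (Pstar p) p s a)
    (hoic : ∀ (i : Fin k) (j : Fin m) (l : Fin k), l ≠ i →
      ∀ (s : S) (t : ℕ), f l (traj T (Pstar (i, j)) s t) = f l s)
    (hach : ∀ (p : Fin k × Fin m) (s : S) (a : A), 0 < ψ (Pstar p) p s a)
    (b : Fin k → Fin m)
    (w : Fin k × Fin m → ℝ)
    (hw : ∀ (l : Fin k) (h : Fin m), w (l, h) = if h = b l then 1 else 0)
    (πGPI : S → A)
    (hGPI : ∀ (s : S) (a : A),
      (Finset.univ.sup' (Finset.univ_nonempty_iff.mpr ⟨(⟨0, hk⟩, ⟨0, hm⟩)⟩)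
          fun p : Fin k × Fin m =>
            ∑ q : Fin k × Fin m, w q * ψ (Pstar p) q s (πGPI s)) ≥
        (Finset.univ.sup' (Finset.univ_nonempty_iff.mpr ⟨(⟨0, hk⟩, ⟨0, hm⟩)⟩)
          fun p : Fin k × Fin m =>
            ∑ q : Fin k × Fin m, w q * ψ (Pstar p) q s a)) :
    ∀ s : S, ∃ t : ℕ, ∀ i : Fin k,
      f i (traj T πGPI s t) ∈ Set.Ico ((b i : ℝ) / m) (((b i : ℝ) + 1) / m) := by
  intro s
  by_contra hcon
  push_neg at hcon
  -- hcon : ∀ t, ∃ i, f i (traj T πGPI s t) ∉ Set.Ico _ _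
  have h1γ : (0:ℝ) < 1 - γ := by linarith
  have hne : (Finset.univ : Finset (Fin k × Fin m)).Nonempty :=
    ⟨(⟨0, hk⟩, ⟨0, hm⟩), Finset.mem_univ _⟩
  -- basic facts about φ
  have hφ_nonneg : ∀ (p : Fin k × Fin m) (x : S), 0 ≤ φ p x := by
    rintro ⟨i, j⟩ x
    rw [hφ]; split <;> norm_num
  have hφ_le_one : ∀ (p : Fin k × Fin m) (x : S), φ p x ≤ 1 := by
    rintro ⟨i, j⟩ x
    rw [hφ]; split <;> norm_num
  have hgeo : Summable (fun t : ℕ => γ ^ (t + 1)) := by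
    simpa [pow_succ] using (summable_geometric_of_lt_one hγ0 hγ1).mul_right γ
  have hSumφ : ∀ (p : Fin k × Fin m) (g : ℕ → S),
      Summable (fun t : ℕ => γ ^ (t + 1) * φ p (g t)) := by
    intro p g
    refine Summable.of_nonneg_of_le
      (fun t => mul_nonneg (pow_nonneg hγ0 _) (hφ_nonneg _ _))
      (fun t => ?_) hgeo
    calc γ ^ (t + 1) * φ p (g t) ≤ γ ^ (t + 1) * 1 :=
          mul_le_mul_of_nonneg_left (hφ_le_one _ _) (pow_nonneg hγ0 _)
      _ = γ ^ (t + 1) := mul_one _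
  -- the count of features in their goal bins (real-valued)
  set N : S → ℝ := fun x => ∑ i : Fin k, φ (i, b i) x with hNdef
  have hN_nonneg : ∀ x, 0 ≤ N x := fun x =>
    Finset.sum_nonneg fun i _ => hφ_nonneg _ _
  have hN_le : ∀ x, N x ≤ k := by
    intro x
    calc N x ≤ ∑ _i : Fin k, (1:ℝ) := Finset.sum_le_sum fun i _ => hφ_le_one _ _
      _ = k := by simp
  have hSumN : ∀ g : ℕ → S, Summable (fun t : ℕ => γ ^ (t + 1) * N (g t)) := by
    intro g
    have := summable_sum (s := (Finset.univ : Finset (Fin k)))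
      (f := fun i (t : ℕ) => γ ^ (t + 1) * φ (i, b i) (g t)) (fun i _ => hSumφ _ _)
    simpa [hNdef, Finset.mul_sum] using this
  -- collapsing the one-hot weighted sum
  have hw_sum : ∀ X : Fin k × Fin m → ℝ,
      (∑ q : Fin k × Fin m, w q * X q) = ∑ i : Fin k, X (i, b i) := by
    intro X
    rw [Fintype.sum_prod_type]
    refine Finset.sum_congr rfl fun i _ => ?_
    simp [hw, ite_mul]
  -- the key identity for the GPE values
  have hL3 : ∀ (π : S → A) (x : S) (a : A),
      (∑ q : Fin k × Fin m, w q * ψ π q x a)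
        = N x + ∑' t : ℕ, γ ^ (t + 1) * N (traj T π (T x a) t) := by
    intro π x a
    rw [hw_sum]
    have : (∑ i : Fin k, ψ π (i, b i) x a)
        = ∑ i : Fin k, (φ (i, b i) x
            + ∑' t : ℕ, γ ^ (t + 1) * φ (i, b i) (traj T π (T x a) t)) :=
      Finset.sum_congr rfl fun i _ => hψ π (i, b i) x a
    rw [this, Finset.sum_add_distrib, ← Summable.tsum_finsetSum (fun i _ => hSumφ _ _)]
    congr 1
    refine tsum_congr fun t => ?_
    rw [hNdef, Finset.mul_sum]
  -- one-step trajectory identity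
  have htraj : ∀ (π : S → A) (x : S) (t : ℕ),
      traj T π (T x (π x)) t = traj T π x (t + 1) := by
    intro π x t
    induction t with
    | zero => rfl
    | succ t ih => simp only [traj, ih]
  -- one-step decomposition of the discounted sum
  have hstep : ∀ (π : S → A) (x : S),
      (∑' t : ℕ, γ ^ (t + 1) * N (traj T π x t))
        = γ * N x + γ * ∑' t : ℕ, γ ^ (t + 1) * N (traj T π (T x (π x)) t) := by
    intro π x
    rw [Summable.tsum_eq_zero_add (hSumN _)]
    congr 1
    · show γ ^ (0 + 1) * N (traj T π x 0) = γ * N x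
      norm_num [traj]
    · calc (∑' t : ℕ, γ ^ (t + 1 + 1) * N (traj T π x (t + 1)))
          = ∑' t : ℕ, γ * (γ ^ (t + 1) * N (traj T π (T x (π x)) t)) := by
            refine tsum_congr fun t => ?_
            rw [htraj]; ring
        _ = γ * ∑' t : ℕ, γ ^ (t + 1) * N (traj T π (T x (π x)) t) := tsum_mul_left
  have hg : (∑' t : ℕ, γ ^ (t + 1)) = γ * (1 - γ)⁻¹ := by
    calc (∑' t : ℕ, γ ^ (t + 1)) = ∑' t : ℕ, γ * γ ^ t := by
          refine tsum_congr fun t => ?_; ring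
      _ = γ * ∑' t : ℕ, γ ^ t := tsum_mul_left
      _ = γ * (1 - γ)⁻¹ := by rw [tsum_geometric_of_lt_one hγ0 hγ1]
  -- the GPI value function
  set G : S → ℝ := fun x => Finset.univ.sup' hne
      (fun p : Fin k × Fin m => ∑ q : Fin k × Fin m, w q * ψ (Pstar p) q x (πGPI x))
    with hGdef
  have hGPI' : ∀ (x : S) (a : A) (p : Fin k × Fin m),
      (∑ q : Fin k × Fin m, w q * ψ (Pstar p) q x a) ≤ G x := by
    intro x a p
    exact le_trans (Finset.le_sup'
      (fun p' : Fin k × Fin m => ∑ q : Fin k × Fin m, w q * ψ (Pstar p') q x a)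
      (Finset.mem_univ p)) (hGPI x a)
  -- upper bound on the GPI value
  have hQub : ∀ (π : S → A) (x : S) (a : A),
      (∑ q : Fin k × Fin m, w q * ψ π q x a) ≤ k / (1 - γ) := by
    intro π x a
    rw [hL3]
    have h2 : (∑' t : ℕ, γ ^ (t + 1) * N (traj T π (T x a) t))
        ≤ ∑' t : ℕ, γ ^ (t + 1) * k := by
      refine Summable.tsum_le_tsum (fun t => ?_) (hSumN _) (hgeo.mul_right _)
      exact mul_le_mul_of_nonneg_left (hN_le _) (pow_nonneg hγ0 _)
    have h3 : (∑' t : ℕ, γ ^ (t + 1) * (k:ℝ)) = γ * (1 - γ)⁻¹ * k := by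
      rw [tsum_mul_right, hg]
    have h4 : N x + γ * (1 - γ)⁻¹ * k ≤ (k:ℝ) / (1 - γ) := by
      have := hN_le x
      rw [div_eq_mul_inv]
      have hinv : (0:ℝ) < (1 - γ)⁻¹ := inv_pos.mpr h1γ
      have : N x * (1 - γ) ≤ (k:ℝ) * (1 - γ) :=
        mul_le_mul_of_nonneg_right this (le_of_lt h1γ)
      nlinarith [hN_le x, mul_pos h1γ hinv, inv_mul_cancel₀ (ne_of_gt h1γ)]
    calc N x + ∑' t : ℕ, γ ^ (t + 1) * N (traj T π (T x a) t)
        ≤ N x + γ * (1 - γ)⁻¹ * k := by rw [← h3]; linarith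
      _ ≤ (k:ℝ) / (1 - γ) := h4
  have hGub : ∀ x, G x ≤ k / (1 - γ) :=
    fun x => Finset.sup'_le _ _ fun p _ => hQub _ _ _
  -- Bellman-type recursion bound for G
  have hGle : ∀ x : S, G x ≤ N x + γ * G (T x (πGPI x)) := by
    intro x
    refine Finset.sup'_le _ _ fun p _ => ?_
    set x1 := T x (πGPI x) with hx1
    have h1 : (∑ q : Fin k × Fin m, w q * ψ (Pstar p) q x (πGPI x))
        = N x + γ * (∑ q : Fin k × Fin m, w q * ψ (Pstar p) q x1 (Pstar p x1)) := by
      rw [hL3, hstep, hL3]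
      ring
    rw [h1]
    have h2 := hGPI' x1 (Pstar p x1) p
    nlinarith [h2, hγ0]
  -- strict lower bound on G when some feature is off-goal
  have hGlb : ∀ (x : S) (i : Fin k),
      f i x ∉ Set.Ico ((b i : ℝ) / m) (((b i : ℝ) + 1) / m) →
      N x / (1 - γ) < G x := by
    intro x i hi
    set a' := Pstar (i, b i) x with ha'
    set x1 := T x a' with hx1
    have hφ0 : φ (i, b i) x = 0 := by rw [hφ, if_neg hi]
    have hNs1 : ∀ t, N (traj T (Pstar (i, b i)) x1 t)
        = N x + φ (i, b i) (traj T (Pstar (i, b i)) x1 t) := by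
      intro t
      have hfl : ∀ l, l ≠ i → f l (traj T (Pstar (i, b i)) x1 t) = f l x := by
        intro l hl
        have h1 := hoic i (b i) l hl x1 t
        have h2 := hoic i (b i) l hl x 1
        have hx1' : traj T (Pstar (i, b i)) x 1 = x1 := rfl
        rw [h1, ← h2, hx1']
      have key : ∀ l, l ≠ i →
          φ (l, b l) (traj T (Pstar (i, b i)) x1 t) = φ (l, b l) x := by
        intro l hl
        rw [hφ, hφ, hfl l hl]
      have e1 : N (traj T (Pstar (i, b i)) x1 t)
          = φ (i, b i) (traj T (Pstar (i, b i)) x1 t)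
            + ∑ l ∈ Finset.univ.erase i, φ (l, b l) (traj T (Pstar (i, b i)) x1 t) :=
        (Finset.add_sum_erase _ _ (Finset.mem_univ i)).symm
      have e2 : N x = φ (i, b i) x + ∑ l ∈ Finset.univ.erase i, φ (l, b l) x :=
        (Finset.add_sum_erase _ _ (Finset.mem_univ i)).symm
      rw [e1, e2, hφ0, Finset.sum_congr rfl
        (fun l hl => key l (Finset.ne_of_mem_erase hl))]
      ring
    have hQ : (∑ q : Fin k × Fin m, w q * ψ (Pstar (i, b i)) q x a')
        = N x / (1 - γ) + ψ (Pstar (i, b i)) (i, b i) x a' := by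
      rw [hL3]
      have e3 : (∑' t : ℕ, γ ^ (t + 1) * N (traj T (Pstar (i, b i)) (T x a') t))
          = (∑' t : ℕ, γ ^ (t + 1) * N x)
            + ∑' t : ℕ, γ ^ (t + 1) * φ (i, b i) (traj T (Pstar (i, b i)) (T x a') t) := by
        rw [← Summable.tsum_add (hgeo.mul_right _) (hSumφ _ _)]
        refine tsum_congr fun t => ?_
        rw [← hx1, hNs1 t]
        ring
      have e4 : (∑' t : ℕ, γ ^ (t + 1) * N x) = γ * (1 - γ)⁻¹ * N x := by
        rw [tsum_mul_right, hg]
      have e5 : ψ (Pstar (i, b i)) (i, b i) x a'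
          = ∑' t : ℕ, γ ^ (t + 1) * φ (i, b i) (traj T (Pstar (i, b i)) (T x a') t) := by
        rw [hψ, hφ0, zero_add]
      rw [e3, e4, ← e5]
      have : N x + γ * (1 - γ)⁻¹ * N x = N x / (1 - γ) := by
        field_simp
        ring
      linarith
    have hach' := hach (i, b i) x a'
    have := hGPI' x a' (i, b i)
    rw [hQ] at this
    linarith
  -- the count as a natural number
  set c : ℕ → ℕ := fun t => (Finset.univ.filter fun i : Fin k =>
      f i (traj T πGPI s t) ∈ Set.Ico ((b i : ℝ) / m) (((b i : ℝ) + 1) / m)).card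
    with hcdef
  have hNc : ∀ t, N (traj T πGPI s t) = (c t : ℝ) := by
    intro t
    rw [hNdef, hcdef]
    simp only
    rw [← Finset.sum_boole]
    refine Finset.sum_congr rfl fun i _ => ?_
    rw [hφ]
  have hck : ∀ t, c t ≤ k := by
    intro t
    calc c t ≤ (Finset.univ : Finset (Fin k)).card := Finset.card_filter_le _ _
      _ = k := by simp
  -- the maximum attained count
  have hbdd : BddAbove (Set.range c) := ⟨k, by rintro n ⟨t, rfl⟩; exact hck t⟩
  obtain ⟨t0, ht0⟩ := Nat.sSup_mem (Set.range_nonempty c) hbdd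
  have hmax : ∀ t, c t ≤ c t0 := by
    intro t
    rw [ht0]
    exact le_csSup hbdd ⟨t, rfl⟩
  -- the gap ε
  obtain ⟨i0, hi0⟩ := hcon t0
  have hε : 0 < G (traj T πGPI s t0) - N (traj T πGPI s t0) / (1 - γ) := by
    have := hGlb (traj T πGPI s t0) i0 hi0
    linarith
  set ε := G (traj T πGPI s t0) - N (traj T πGPI s t0) / (1 - γ) with hεdef
  -- unrolling the recursion
  have hunroll : ∀ (n t : ℕ), G (traj T πGPI s t)
      ≤ (∑ u ∈ Finset.range n, γ ^ u * N (traj T πGPI s (t + u)))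
        + γ ^ n * ((k:ℝ) / (1 - γ)) := by
    intro n
    induction n with
    | zero => intro t; simpa using hGub (traj T πGPI s t)
    | succ n ih =>
      intro t
      have h1 : G (traj T πGPI s t)
          ≤ N (traj T πGPI s t) + γ * G (traj T πGPI s (t + 1)) := by
        have := hGle (traj T πGPI s t)
        simpa [traj] using this
      have h2 := ih (t + 1)
      have h3 : γ * G (traj T πGPI s (t + 1))
          ≤ γ * ((∑ u ∈ Finset.range n, γ ^ u * N (traj T πGPI s (t + 1 + u)))
            + γ ^ n * ((k:ℝ) / (1 - γ))) := mul_le_mul_of_nonneg_left h2 hγ0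
      have h4 : N (traj T πGPI s t)
          + γ * ((∑ u ∈ Finset.range n, γ ^ u * N (traj T πGPI s (t + 1 + u)))
            + γ ^ n * ((k:ℝ) / (1 - γ)))
          = (∑ u ∈ Finset.range (n + 1), γ ^ u * N (traj T πGPI s (t + u)))
            + γ ^ (n + 1) * ((k:ℝ) / (1 - γ)) := by
        rw [Finset.sum_range_succ', mul_add, Finset.mul_sum]
        have e : ∀ u, t + 1 + u = t + (u + 1) := fun u => by omega
        simp only [e, pow_zero, one_mul, Nat.add_zero]
        rw [Finset.sum_congr rfl (fun u _ => show
          γ * (γ ^ u * N (traj T πGPI s (t + (u + 1))))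
            = γ ^ (u + 1) * N (traj T πGPI s (t + (u + 1))) by ring)]
        ring
      linarith
  -- conclude
  set C := (k:ℝ) / (1 - γ) + 1 with hCdef
  have hC : 0 < C := by
    rw [hCdef]
    have : (0:ℝ) ≤ (k:ℝ) / (1 - γ) := div_nonneg (Nat.cast_nonneg k) (le_of_lt h1γ)
    linarith
  clear_value N G c ε C
  obtain ⟨n, hn⟩ := exists_pow_lt_of_lt_one (div_pos hε hC) hγ1
  have hγn : γ ^ n * C < ε := by
    have := (mul_lt_mul_of_pos_right hn hC)
    rwa [div_mul_cancel₀ _ (ne_of_gt hC)] at this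
  have hsum_le : (∑ u ∈ Finset.range n, γ ^ u * N (traj T πGPI s (t0 + u)))
      ≤ (c t0 : ℝ) * (1 - γ)⁻¹ := by
    calc (∑ u ∈ Finset.range n, γ ^ u * N (traj T πGPI s (t0 + u)))
        ≤ ∑ u ∈ Finset.range n, γ ^ u * (c t0 : ℝ) := by
          refine Finset.sum_le_sum fun u _ => ?_
          refine mul_le_mul_of_nonneg_left ?_ (pow_nonneg hγ0 _)
          rw [hNc]
          exact_mod_cast hmax (t0 + u)
      _ = (∑ u ∈ Finset.range n, γ ^ u) * (c t0 : ℝ) := by rw [Finset.sum_mul]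
      _ ≤ (1 - γ)⁻¹ * (c t0 : ℝ) := by
          refine mul_le_mul_of_nonneg_right ?_ (Nat.cast_nonneg _)
          calc (∑ u ∈ Finset.range n, γ ^ u) ≤ ∑' u : ℕ, γ ^ u :=
                Summable.sum_le_tsum _ (fun u _ => pow_nonneg hγ0 _)
                  (summable_geometric_of_lt_one hγ0 hγ1)
            _ = (1 - γ)⁻¹ := tsum_geometric_of_lt_one hγ0 hγ1
      _ = (c t0 : ℝ) * (1 - γ)⁻¹ := mul_comm _ _
  have hfin := hunroll n t0
  have hkC : γ ^ n * ((k:ℝ) / (1 - γ)) ≤ γ ^ n * C := by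
    refine mul_le_mul_of_nonneg_left ?_ (pow_nonneg hγ0 _)
    rw [hCdef]; linarith
  have hlow : N (traj T πGPI s t0) / (1 - γ) + ε = G (traj T πGPI s t0) := by
    rw [hεdef]; ring
  have hNt0 : N (traj T πGPI s t0) / (1 - γ) = (c t0 : ℝ) * (1 - γ)⁻¹ := by
    rw [hNc, div_eq_mul_inv]
  linarith
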